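/- The toric ideal of the semigroup R_{0,3}(Z/3Z) (generated in degree 1 by the 9 vertices of P_{0,3}(Z/3Z) lifted to height 1) is generated by the two cubic binomials XYZ − P_{12}P_{23}P_{31} and XYZ − P_{21}P_{32}P_{13} in the polynomial ring C[X, Y, Z, P_{12}, P_{23}, P_{31}, P_{21}, P_{32}, P_{13}], where the variables correspond to the 9 generators of the semigroup. -/

import Mathlib

/-!
Both binomials lie in the kernel because the generators of `X, Y, Z`, of `P₁₂, P₂₃, P₃₁` and of
`P₂₁, P₃₂, P₁₃` have the same sum. Conversely, rewriting `P₁₂P₂₃P₃₁ ↦ XYZ` and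
`P₂₁P₃₂P₁₃ ↦ XYZ` as often as possible brings every monomial, modulo the ideal, to one divisible
by neither of these cubic monomials. The integer relations among the nine generators are spanned
by the exponent differences of the two binomials, so two such reduced monomials of equal weight
coincide: otherwise one of them would be divisible by `P₁₂P₂₃P₃₁` or by `P₂₁P₃₂P₁₃`. Hence the
monomial map is injective on reduced polynomials, and a kernel element reduces to zero.
-/

/-- The nine degree-1 generators of the phylogenetic semigroup `R_{0,3}(ℤ/3ℤ)`:
the lattice points of `P_{0,3}(ℤ/3ℤ)` (coordinates `x^{e_a}_{[1]}, x^{e_a}_{[2]}` for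
the three tripod edges, in the order `(e₁,1),(e₁,2),(e₂,1),(e₂,2),(e₃,1),(e₃,2)`)
lifted to height 1 (last coordinate = degree).  In order:
`X ↔ (0,0,0)`, `Y ↔ (1,1,1)`, `Z ↔ (2,2,2)`,
`P₁₂ ↔ (1,2,0)`, `P₂₃ ↔ (0,1,2)`, `P₃₁ ↔ (2,0,1)`,
`P₂₁ ↔ (2,1,0)`, `P₃₂ ↔ (0,2,1)`, `P₁₃ ↔ (1,0,2)`. -/
def phyloGen : Fin 9 → (Fin 7 → ℤ) :=
  ![![0, 0, 0, 0, 0, 0, 1],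
    ![1, 0, 1, 0, 1, 0, 1],
    ![0, 1, 0, 1, 0, 1, 1],
    ![1, 0, 0, 1, 0, 0, 1],
    ![0, 0, 1, 0, 0, 1, 1],
    ![0, 1, 0, 0, 1, 0, 1],
    ![0, 1, 1, 0, 0, 0, 1],
    ![0, 0, 0, 1, 1, 0, 1],
    ![1, 0, 0, 0, 0, 1, 1]]

/-- The monomial map `ℂ[X,Y,Z,P₁₂,P₂₃,P₃₁,P₂₁,P₃₂,P₁₃] → ℂ[R_{0,3}(ℤ/3ℤ)]` sending
each variable to the corresponding semigroup generator. -/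
noncomputable def phyloMap : MvPolynomial (Fin 9) ℂ →ₐ[ℂ] AddMonoidAlgebra ℂ (Fin 7 → ℤ) :=
  MvPolynomial.aeval fun i => AddMonoidAlgebra.single (phyloGen i) 1

namespace MvPolynomial

variable {σ R M : Type*} [AddCommMonoid M]

theorem aeval_single_eq_mapDomainAlgHom [CommSemiring R] (g : σ → M) :
    aeval (fun i => AddMonoidAlgebra.single (g i) (1 : R)) =
      AddMonoidAlgebra.mapDomainAlgHom R R (Finsupp.linearCombination ℕ g).toAddMonoidHom := by
  refine algHom_ext fun i => ?_
  rw [aeval_X, AddMonoidAlgebra.mapDomainAlgHom_apply, X, ← single_eq_monomial,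
    AddMonoidAlgebra.mapDomain_single]
  simp

theorem eq_zero_of_mapDomain_eq_zero [CommSemiring R] {w : (σ →₀ ℕ) → M} {S : Set (σ →₀ ℕ)}
    (hw : S.InjOn w) {p : MvPolynomial σ R} (hp : ↑p.support ⊆ S)
    (h : AddMonoidAlgebra.mapDomain w p = 0) : p = 0 := by
  refine AddMonoidAlgebra.coeff_injective (Finsupp.mapDomain_injOn S hw hp ?_ ?_)
  · simp
  · simpa using congrArg AddMonoidAlgebra.coeff h

variable [CommRing R]

theorem monomial_sub_monomial_mem_ker_mapDomainRingHom (w : (σ →₀ ℕ) →+ M) {a b : σ →₀ ℕ}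
    (h : w a = w b) (c : R) :
    monomial a c - monomial b c ∈ RingHom.ker (AddMonoidAlgebra.mapDomainRingHom R w) := by
  rw [RingHom.mem_ker, map_sub, sub_eq_zero, ← single_eq_monomial, ← single_eq_monomial]
  simp [h]

theorem exists_sub_mem_support_subset {I : Ideal (MvPolynomial σ R)} {S : Set (σ →₀ ℕ)}
    (hred : ∀ a, ∃ b ∈ S, monomial a (1 : R) - monomial b 1 ∈ I) (p : MvPolynomial σ R) :
    ∃ q : MvPolynomial σ R, p - q ∈ I ∧ ↑q.support ⊆ S := by
  classical
  choose nf hnfS hnfI using hred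
  refine ⟨∑ a ∈ p.support, monomial (nf a) (p.coeff a), ?_, ?_⟩
  · have hsum : p - ∑ a ∈ p.support, monomial (nf a) (p.coeff a) =
        ∑ a ∈ p.support, (monomial a (p.coeff a) - monomial (nf a) (p.coeff a)) := by
      rw [Finset.sum_sub_distrib, ← p.as_sum]
    rw [hsum]
    refine Ideal.sum_mem _ fun a _ => ?_
    have h := I.mul_mem_left (C (p.coeff a)) (hnfI a)
    rwa [mul_sub, C_mul_monomial, C_mul_monomial, mul_one] at h
  · intro b hb
    obtain ⟨a, -, hab⟩ := Finset.mem_biUnion.1 (support_sum hb)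
    rw [Finset.mem_singleton.1 (support_monomial_subset hab)]
    exact hnfS a

theorem ker_mapDomainRingHom_eq (w : (σ →₀ ℕ) →+ M) {I : Ideal (MvPolynomial σ R)}
    (hI : I ≤ RingHom.ker (AddMonoidAlgebra.mapDomainRingHom R w)) {S : Set (σ →₀ ℕ)}
    (hw : S.InjOn w) (hred : ∀ a, ∃ b ∈ S, monomial a (1 : R) - monomial b 1 ∈ I) :
    RingHom.ker (AddMonoidAlgebra.mapDomainRingHom R w) = I := by
  refine le_antisymm (fun p hp => ?_) hI
  obtain ⟨q, hpq, hqS⟩ := exists_sub_mem_support_subset hred p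
  have hq : q = 0 := by
    refine eq_zero_of_mapDomain_eq_zero hw hqS ?_
    have h := hI hpq
    rwa [RingHom.mem_ker, map_sub, RingHom.mem_ker.1 hp, zero_sub, neg_eq_zero] at h
  rwa [hq, sub_zero] at hpq

theorem monomial_add_nsmul_sub_mem {I : Ideal (MvPolynomial σ R)} {s t : σ →₀ ℕ}
    (h : monomial s (1 : R) - monomial t 1 ∈ I) (b : σ →₀ ℕ) (m : ℕ) :
    monomial (b + m • s) (1 : R) - monomial (b + m • t) 1 ∈ I := by
  have := I.mul_mem_left (monomial b 1) (I.mem_of_dvd (sub_dvd_pow_sub_pow _ _ m) h)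
  rwa [monomial_pow, monomial_pow, one_pow, mul_sub, monomial_mul, monomial_mul, one_mul] at this

theorem X_mul_X_mul_X (i j k : σ) :
    (X i * X j * X k : MvPolynomial σ R) =
      monomial (Finsupp.single i 1 + Finsupp.single j 1 + Finsupp.single k 1) 1 := by
  simp only [X, monomial_mul, one_mul]

end MvPolynomial

open MvPolynomial

/-- Exponents of the monomials divisible neither by `P₁₂P₂₃P₃₁` nor by `P₂₁P₃₂P₁₃`. -/
def phyloReducedExps : Set (Fin 9 →₀ ℕ) :=
  {a | (a 3 = 0 ∨ a 4 = 0 ∨ a 5 = 0) ∧ (a 6 = 0 ∨ a 7 = 0 ∨ a 8 = 0)}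

theorem linearCombination_phyloGen (a : Fin 9 →₀ ℕ) :
    Finsupp.linearCombination ℕ phyloGen a =
      Nat.cast ∘ ![a 1 + a 3 + a 8, a 2 + a 5 + a 6, a 1 + a 4 + a 6, a 2 + a 3 + a 7,
        a 1 + a 5 + a 7, a 2 + a 4 + a 8, a 0 + a 1 + a 2 + a 3 + a 4 + a 5 + a 6 + a 7 + a 8] := by
  rw [Finsupp.linearCombination_apply, Finsupp.sum_fintype _ _ fun i => zero_smul ℕ (phyloGen i)]
  ext j
  fin_cases j <;> simp [Fin.sum_univ_succ, phyloGen] <;> ring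

theorem injOn_linearCombination_phyloGen :
    phyloReducedExps.InjOn (Finsupp.linearCombination ℕ phyloGen) := by
  rintro a ⟨ha₁, ha₂⟩ b ⟨hb₁, hb₂⟩ h
  simp only [linearCombination_phyloGen, funext_iff, Fin.forall_fin_succ, Function.comp_apply,
    Nat.cast_inj, Matrix.cons_val_zero, Matrix.cons_val_succ, Matrix.cons_val_fin_one,
    forall_const] at h
  obtain ⟨e0, e1, e2, e3, e4, e5, e6⟩ := h
  have h345 : (a 4 : ℤ) - b 4 = a 3 - b 3 ∧ (a 5 : ℤ) - b 5 = a 3 - b 3 := by omega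
  have h678 : (a 7 : ℤ) - b 7 = a 6 - b 6 ∧ (a 8 : ℤ) - b 8 = a 6 - b 6 := by omega
  have h3 : a 3 = b 3 := by omega
  have h6 : a 6 = b 6 := by omega
  ext i
  fin_cases i <;> simp <;> omega

theorem exists_mem_phyloReducedExps_sub_mem {R : Type*} [CommRing R]
    {I : Ideal (MvPolynomial (Fin 9) R)}
    (h₁ : X 0 * X 1 * X 2 - X 3 * X 4 * X 5 ∈ I) (h₂ : X 0 * X 1 * X 2 - X 6 * X 7 * X 8 ∈ I)
    (a : Fin 9 →₀ ℕ) : ∃ b ∈ phyloReducedExps, monomial a (1 : R) - monomial b 1 ∈ I := by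
  rw [X_mul_X_mul_X, X_mul_X_mul_X, ← neg_mem_iff, neg_sub] at h₁ h₂
  set s₀ : Fin 9 →₀ ℕ := Finsupp.single 0 1 + Finsupp.single 1 1 + Finsupp.single 2 1
  set s₁ : Fin 9 →₀ ℕ := Finsupp.single 3 1 + Finsupp.single 4 1 + Finsupp.single 5 1
  set s₂ : Fin 9 →₀ ℕ := Finsupp.single 6 1 + Finsupp.single 7 1 + Finsupp.single 8 1
  set m := min (a 3) (min (a 4) (a 5))
  set n := min (a 6) (min (a 7) (a 8))
  obtain ⟨c, hc⟩ : ∃ c, a = c + n • s₂ + m • s₁ := by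
    obtain ⟨c, hc⟩ := exists_add_of_le (show n • s₂ + m • s₁ ≤ a from fun i => by
      fin_cases i <;> simp [s₁, s₂] <;> omega)
    exact ⟨c, by rw [hc]; abel⟩
  refine ⟨c + (m + n) • s₀, ?_, ?_⟩
  · have hca : a 3 = c 3 + m ∧ a 4 = c 4 + m ∧ a 5 = c 5 + m ∧
        a 6 = c 6 + n ∧ a 7 = c 7 + n ∧ a 8 = c 8 + n := by
      simp [hc, s₁, s₂]
    suffices (c 3 = 0 ∨ c 4 = 0 ∨ c 5 = 0) ∧ (c 6 = 0 ∨ c 7 = 0 ∨ c 8 = 0) by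
      simpa [phyloReducedExps, s₀]
    omega
  · have h := add_mem (monomial_add_nsmul_sub_mem h₁ (c + n • s₂) m)
      (monomial_add_nsmul_sub_mem h₂ (c + m • s₀) n)
    rwa [← hc, add_right_comm c (n • s₂) (m • s₀), add_assoc c (m • s₀) (n • s₀), ← add_nsmul,
      sub_add_sub_cancel] at h

open MvPolynomial in
theorem stmt18 :
    RingHom.ker (phyloMap : MvPolynomial (Fin 9) ℂ →+* AddMonoidAlgebra ℂ (Fin 7 → ℤ))
      = Ideal.span {X 0 * X 1 * X 2 - X 3 * X 4 * X 5,
                    X 0 * X 1 * X 2 - X 6 * X 7 * X 8} := by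
  have hmap : (phyloMap : MvPolynomial (Fin 9) ℂ →+* AddMonoidAlgebra ℂ (Fin 7 → ℤ)) =
      AddMonoidAlgebra.mapDomainRingHom ℂ (Finsupp.linearCombination ℕ phyloGen).toAddMonoidHom :=
    congrArg AlgHom.toRingHom (aeval_single_eq_mapDomainAlgHom phyloGen)
  have hspan : Ideal.span {X 0 * X 1 * X 2 - X 3 * X 4 * X 5, X 0 * X 1 * X 2 - X 6 * X 7 * X 8}
      ≤ RingHom.ker (AddMonoidAlgebra.mapDomainRingHom ℂ
        (Finsupp.linearCombination ℕ phyloGen).toAddMonoidHom) := by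
    refine Ideal.span_le.2 (Set.insert_subset_iff.2 ⟨?_, Set.singleton_subset_iff.2 ?_⟩) <;>
      rw [SetLike.mem_coe, X_mul_X_mul_X, X_mul_X_mul_X] <;>
      exact monomial_sub_monomial_mem_ker_mapDomainRingHom _
        (by simp [linearCombination_phyloGen]) _
  rw [hmap]
  exact ker_mapDomainRingHom_eq _ hspan injOn_linearCombination_phyloGen
    (exists_mem_phyloReducedExps_sub_mem (Ideal.subset_span (by simp))
      (Ideal.subset_span (by simp)))
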